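/- Fix an integer j and let w ∈ ℂ satisfy w² = 3(2d−1)(d−3). For every odd k, the set of points (x : y : z) ∈ ℙ²(ℂ) with z = 0 lying on the hyperosculating conic O_{j,k} = 0 equals the set of the two points ((d−2)(5d−3) + 2(d−1)w : d(d+1)ζ^{−j} : 0) and ((d−2)(5d−3) − 2(d−1)w : d(d+1)ζ^{−j} : 0); in particular this set is independent of k, and for d > 3 these are two distinct points, while for d = 3 they coincide with the single point (1 : ζ^{−j} : 0). Thus the d hyperosculating conics at the d co-linear sextactic points s_{j,k} (k odd) have two common points on the line z = 0 when d > 3, and one when d = 3. -/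

import Mathlib

open scoped LinearAlgebra.Projectivization

/-- The point of `ℙ²(ℂ)` with homogeneous coordinates `v` (junk value if `v = 0`). -/
noncomputable def P2mk (v : Fin 3 → ℂ) : ℙ ℂ (Fin 3 → ℂ) :=
  if hv : v ≠ 0 then Projectivization.mk ℂ v hv
  else Projectivization.mk ℂ ![1, 0, 0] (fun h => by simpa using congrFun h 0)

/-!
On the line `z = 0` every term of `O_{j,k}` involving `u`, `c` or `k` vanishes, leaving the binary
form `A (ζ^{-j} x)² - 2 B (ζ^{-j} x) y + A y²` with `A = d(d+1)` and `B = (d-2)(5d-3)`.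
Its discriminant is `B² - A² = 12 (d-1)² (2d-1) (d-3) = (2(d-1)w)²`, so it splits into the two
linear factors `A ζ^{-j} x - (B ± 2(d-1)w) y`, whose zeros are the two points; they coincide
exactly when `w = 0`, i.e. when `d = 3`.
-/

lemma P2mk_of_ne_zero {v : Fin 3 → ℂ} (hv : v ≠ 0) : P2mk v = Projectivization.mk ℂ v hv :=
  dif_pos hv

lemma vec3_ne_zero {K : Type*} [Zero K] {x y z : K} (hy : y ≠ 0) : ![x, y, z] ≠ 0 :=
  fun h => hy (by simpa using congrFun h 1)

namespace Projectivization

variable {K : Type*} [Field K]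

lemma eq_mk_vec3_iff {x y : K} (hy : y ≠ 0) (P : ℙ K (Fin 3 → K)) :
    P = mk K ![x, y, 0] (vec3_ne_zero hy) ↔ P.rep 2 = 0 ∧ y * P.rep 0 = x * P.rep 1 := by
  conv_lhs => rw [← P.mk_rep, mk_eq_mk_iff' K _ _ P.rep_nonzero]
  constructor
  · rintro ⟨a, ha⟩
    simp only [← ha, Pi.smul_apply, smul_eq_mul, Matrix.cons_val_zero, Matrix.cons_val_one,
      Matrix.cons_val_two, Matrix.head_cons, Matrix.tail_cons, mul_zero, true_and]
    ring
  · rintro ⟨h2, h01⟩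
    refine ⟨P.rep 1 / y, funext fun i => ?_⟩
    fin_cases i
    · change P.rep 1 / y * x = P.rep 0
      field_simp
      linear_combination -h01
    · simp [hy]
    · simp [h2]

lemma mk_vec3_eq_mk_vec3_iff {x y x' y' : K} (hy : y ≠ 0) (hy' : y' ≠ 0) :
    mk K ![x, y, 0] (vec3_ne_zero hy) = mk K ![x', y', 0] (vec3_ne_zero hy') ↔
      x * y' = x' * y := by
  rw [eq_mk_vec3_iff hy']
  obtain ⟨a, ha⟩ := exists_smul_eq_mk_rep K _ (vec3_ne_zero (x := x) (z := 0) hy)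
  simp only [← ha, Units.smul_def, Pi.smul_apply, smul_eq_mul, Matrix.cons_val_zero,
    Matrix.cons_val_one, Matrix.cons_val_two, Matrix.head_cons, Matrix.tail_cons, mul_zero,
    true_and]
  constructor
  · intro h
    exact mul_left_cancel₀ a.ne_zero (by linear_combination h)
  · intro h
    linear_combination (a : K) * h

theorem setOf_rep_two_eq_zero_and_quadratic_eq_zero {a b c D : K} (ha : a ≠ 0)
    (hD : D ^ 2 = b ^ 2 - a * c) :
    {P : ℙ K (Fin 3 → K) | P.rep 2 = 0 ∧
        a * P.rep 0 ^ 2 - 2 * b * P.rep 0 * P.rep 1 + c * P.rep 1 ^ 2 = 0} =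
      {mk K ![b + D, a, 0] (vec3_ne_zero ha), mk K ![b - D, a, 0] (vec3_ne_zero ha)} := by
  ext P
  rw [Set.mem_insert_iff, Set.mem_singleton_iff, eq_mk_vec3_iff ha, eq_mk_vec3_iff ha,
    ← and_or_left, Set.mem_ofPred_eq]
  refine and_congr_right fun _ => ?_
  have factor : a * (a * P.rep 0 ^ 2 - 2 * b * P.rep 0 * P.rep 1 + c * P.rep 1 ^ 2) =
      (a * P.rep 0 - (b + D) * P.rep 1) * (a * P.rep 0 - (b - D) * P.rep 1) := by
    linear_combination P.rep 1 ^ 2 * hD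
  rw [← mul_right_inj' ha, mul_zero, factor, mul_eq_zero, sub_eq_zero, sub_eq_zero]

end Projectivization

open Projectivization

lemma two_mul_sub_one_mul_ne_zero {d : ℕ} (hd : 3 < d) {w : ℂ}
    (hw : w ^ 2 = 3 * (2 * (d : ℂ) - 1) * ((d : ℂ) - 3)) : 2 * ((d : ℂ) - 1) * w ≠ 0 := by
  have hd1 : (d : ℂ) - 1 ≠ 0 := sub_ne_zero.2 (by exact_mod_cast (by omega : d ≠ 1))
  have hd2 : 2 * (d : ℂ) - 1 ≠ 0 := sub_ne_zero.2 (by exact_mod_cast (by omega : 2 * d ≠ 1))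
  have hd3 : (d : ℂ) - 3 ≠ 0 := sub_ne_zero.2 (by exact_mod_cast (by omega : d ≠ 3))
  have hw0 : w ≠ 0 := ne_zero_pow two_ne_zero
    (by rw [hw]; exact mul_ne_zero (mul_ne_zero three_ne_zero hd2) hd3)
  exact mul_ne_zero (mul_ne_zero two_ne_zero hd1) hw0

theorem fermat_hyperosculating_conics_B_general (d : ℕ) (hd : 3 ≤ d) (ζ u c : ℂ)
    (hζ : IsPrimitiveRoot ζ d)
    (j : ℤ) (w : ℂ) (hw : w ^ 2 = 3 * (2 * (d : ℂ) - 1) * ((d : ℂ) - 3)) :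
    (∀ k : ℤ, Odd k →
      {P : ℙ ℂ (Fin 3 → ℂ) | P.rep 2 = 0 ∧
          (d : ℂ) * ((d : ℂ) + 1) * ζ ^ (-2 * j) * P.rep 0 ^ 2
            + (d : ℂ) * ((d : ℂ) + 1) * P.rep 1 ^ 2
            - 4 * ((d : ℂ) + 1) * (2 * (d : ℂ) - 3) * u ^ (2 * k) * (c⁻¹) ^ 2 * P.rep 2 ^ 2
            - 2 * ((d : ℂ) - 2) * (5 * (d : ℂ) - 3) * ζ ^ (-j) * P.rep 0 * P.rep 1
            + 8 * (d : ℂ) * ((d : ℂ) - 2) * ζ ^ (-j) * u ^ k * c⁻¹ * P.rep 0 * P.rep 2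
            + 8 * (d : ℂ) * ((d : ℂ) - 2) * u ^ k * c⁻¹ * P.rep 1 * P.rep 2 = 0}
        = {P2mk ![((d : ℂ) - 2) * (5 * (d : ℂ) - 3) + 2 * ((d : ℂ) - 1) * w,
                  (d : ℂ) * ((d : ℂ) + 1) * ζ ^ (-j), 0],
           P2mk ![((d : ℂ) - 2) * (5 * (d : ℂ) - 3) - 2 * ((d : ℂ) - 1) * w,
                  (d : ℂ) * ((d : ℂ) + 1) * ζ ^ (-j), 0]}) ∧
    (3 < d →
      P2mk ![((d : ℂ) - 2) * (5 * (d : ℂ) - 3) + 2 * ((d : ℂ) - 1) * w,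
             (d : ℂ) * ((d : ℂ) + 1) * ζ ^ (-j), 0] ≠
      P2mk ![((d : ℂ) - 2) * (5 * (d : ℂ) - 3) - 2 * ((d : ℂ) - 1) * w,
             (d : ℂ) * ((d : ℂ) + 1) * ζ ^ (-j), 0]) ∧
    (d = 3 →
      P2mk ![((d : ℂ) - 2) * (5 * (d : ℂ) - 3) + 2 * ((d : ℂ) - 1) * w,
             (d : ℂ) * ((d : ℂ) + 1) * ζ ^ (-j), 0] =
        P2mk ![((d : ℂ) - 2) * (5 * (d : ℂ) - 3) - 2 * ((d : ℂ) - 1) * w,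
               (d : ℂ) * ((d : ℂ) + 1) * ζ ^ (-j), 0] ∧
      P2mk ![((d : ℂ) - 2) * (5 * (d : ℂ) - 3) + 2 * ((d : ℂ) - 1) * w,
             (d : ℂ) * ((d : ℂ) + 1) * ζ ^ (-j), 0] = P2mk ![1, ζ ^ (-j), 0]) := by
  set Z := ζ ^ (-j)
  set A : ℂ := d * (d + 1) with hA_def
  set B : ℂ := (d - 2) * (5 * d - 3)
  set D : ℂ := 2 * (d - 1) * w with hD_def
  have hZ : Z ≠ 0 := zpow_ne_zero _ (hζ.ne_zero (by omega))
  have hA : A ≠ 0 := by rw [hA_def]; exact_mod_cast Nat.mul_ne_zero (by omega) (by omega)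
  have hAZ : A * Z ≠ 0 := mul_ne_zero hA hZ
  have hZ2 : ζ ^ (-2 * j) = Z ^ 2 := by
    rw [show -2 * j = -j * (2 : ℕ) by push_cast; ring, zpow_mul, zpow_natCast]
  -- On `z = 0` the conic is `Z` times the form `A Z x² - 2 B x y + A Z⁻¹ y²`.
  have hdisc : D ^ 2 = B ^ 2 - A * Z * (A * Z⁻¹) := by
    linear_combination 4 * ((d : ℂ) - 1) ^ 2 * hw + A ^ 2 * mul_inv_cancel₀ hZ
  rw [P2mk_of_ne_zero (vec3_ne_zero hAZ), P2mk_of_ne_zero (vec3_ne_zero hAZ),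
    P2mk_of_ne_zero (vec3_ne_zero hZ)]
  refine ⟨fun k _ => ?_, fun hd_gt => ?_, fun hd_eq => ?_⟩
  · rw [← setOf_rep_two_eq_zero_and_quadratic_eq_zero hAZ hdisc]
    refine Set.ext fun P => and_congr_right fun h2 => ?_
    rw [h2, hZ2]
    refine Iff.trans (iff_of_eq (congrArg (· = 0) ?_)) (mul_eq_zero_iff_left hZ)
    linear_combination -A * P.rep 1 ^ 2 * mul_inv_cancel₀ hZ
  · rw [Ne, mk_vec3_eq_mk_vec3_iff hAZ hAZ]
    intro h
    exact two_mul_sub_one_mul_ne_zero hd_gt hw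
      (by linear_combination mul_right_cancel₀ hAZ h / 2)
  · subst hd_eq
    have hw0 : w = 0 := pow_eq_zero_iff two_ne_zero |>.1 (by rw [hw]; norm_num)
    have hD : D = 0 := by rw [hD_def, hw0, mul_zero]
    rw [mk_vec3_eq_mk_vec3_iff hAZ hAZ, mk_vec3_eq_mk_vec3_iff hAZ hZ, hD, hA_def]
    constructor <;> norm_num

/-- Fix `j` and `w` with `w² = 3(2d-1)(d-3)`.  For every odd `k`, the intersection of the
hyperosculating conic `O_{j,k}` of the Fermat curve `F_d` (at the sextactic point
`s_{j,k} = (ζ^j : 1 : u^{-k}c)`) with the line `z = 0` is the pair of points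
`((d-2)(5d-3) ± 2(d-1)w : d(d+1)ζ^{-j} : 0)`; in particular it is independent of `k`.
For `d > 3` these are two distinct points, while for `d = 3` they coincide with the single
point `(1 : ζ^{-j} : 0)`.  Thus the `d` hyperosculating conics at the `d` co-linear
sextactic points `s_{j,k}` (`k` odd) have two common points on `z = 0` when `d > 3`, and
one when `d = 3`. -/
theorem fermat_hyperosculating_conics_B (d : ℕ) (hd : 3 ≤ d) (ζ u c : ℂ)
    (hζ : IsPrimitiveRoot ζ d) (hu : IsPrimitiveRoot u (2 * d)) (hc : c ^ d = 2)
    (j : ℤ) (w : ℂ) (hw : w ^ 2 = 3 * (2 * (d : ℂ) - 1) * ((d : ℂ) - 3)) :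
    (∀ k : ℤ, Odd k →
      {P : ℙ ℂ (Fin 3 → ℂ) | P.rep 2 = 0 ∧
          (d : ℂ) * ((d : ℂ) + 1) * ζ ^ (-2 * j) * P.rep 0 ^ 2
            + (d : ℂ) * ((d : ℂ) + 1) * P.rep 1 ^ 2
            - 4 * ((d : ℂ) + 1) * (2 * (d : ℂ) - 3) * u ^ (2 * k) * (c⁻¹) ^ 2 * P.rep 2 ^ 2
            - 2 * ((d : ℂ) - 2) * (5 * (d : ℂ) - 3) * ζ ^ (-j) * P.rep 0 * P.rep 1
            + 8 * (d : ℂ) * ((d : ℂ) - 2) * ζ ^ (-j) * u ^ k * c⁻¹ * P.rep 0 * P.rep 2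
            + 8 * (d : ℂ) * ((d : ℂ) - 2) * u ^ k * c⁻¹ * P.rep 1 * P.rep 2 = 0}
        = {P2mk ![((d : ℂ) - 2) * (5 * (d : ℂ) - 3) + 2 * ((d : ℂ) - 1) * w,
                  (d : ℂ) * ((d : ℂ) + 1) * ζ ^ (-j), 0],
           P2mk ![((d : ℂ) - 2) * (5 * (d : ℂ) - 3) - 2 * ((d : ℂ) - 1) * w,
                  (d : ℂ) * ((d : ℂ) + 1) * ζ ^ (-j), 0]}) ∧
    (3 < d →
      P2mk ![((d : ℂ) - 2) * (5 * (d : ℂ) - 3) + 2 * ((d : ℂ) - 1) * w,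
             (d : ℂ) * ((d : ℂ) + 1) * ζ ^ (-j), 0] ≠
      P2mk ![((d : ℂ) - 2) * (5 * (d : ℂ) - 3) - 2 * ((d : ℂ) - 1) * w,
             (d : ℂ) * ((d : ℂ) + 1) * ζ ^ (-j), 0]) ∧
    (d = 3 →
      P2mk ![((d : ℂ) - 2) * (5 * (d : ℂ) - 3) + 2 * ((d : ℂ) - 1) * w,
             (d : ℂ) * ((d : ℂ) + 1) * ζ ^ (-j), 0] =
        P2mk ![((d : ℂ) - 2) * (5 * (d : ℂ) - 3) - 2 * ((d : ℂ) - 1) * w,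
               (d : ℂ) * ((d : ℂ) + 1) * ζ ^ (-j), 0] ∧
      P2mk ![((d : ℂ) - 2) * (5 * (d : ℂ) - 3) + 2 * ((d : ℂ) - 1) * w,
             (d : ℂ) * ((d : ℂ) + 1) * ζ ^ (-j), 0] = P2mk ![1, ζ ^ (-j), 0]) :=
  fermat_hyperosculating_conics_B_general d hd ζ u c hζ j w hw
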